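/- The map φ from the inverse limit 𝒳 of a FASO for X to X, sending each thread (C_n) to the unique point x with C_n → {x} in Hausdorff distance, is surjective and continuous. -/
import Mathlib


open Metric Set Filter

/-- The FASO bonding map at one level: `q(C) = ⋃_{c ∈ C} B(c,ε) ∩ A`. -/
def qmap {X : Type*} [MetricSpace X] (ε : ℝ) (A : Set X) (C : Set X) : Set X :=
  ⋃ c ∈ C, Metric.ball c ε ∩ A

/-- Iterated bonding maps: `qdown ε A n k` is `q_{n, n+k}`, mapping subsets at level `n+k`
down to subsets at level `n`. -/
def qdown {X : Type*} [MetricSpace X] (ε : ℕ → ℝ) (A : ℕ → Set X) (n : ℕ) :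
    ℕ → Set X → Set X
  | 0, C => C
  | k + 1, C => qdown ε A n k (qmap (ε (n + k)) (A (n + k)) C)

/-- `A_m(x)`: the set of nearest points of `A` to `x`. -/
def nearestPts {X : Type*} [MetricSpace X] (x : X) (A : Set X) : Set X :=
  {a ∈ A | dist x a = Metric.infDist x A}

/-- `X_*^n = ⋃_{m > n} q_{n,m}(A_m(x))`. -/
def Xstar {X : Type*} [MetricSpace X] (ε : ℕ → ℝ) (A : ℕ → Set X) (x : X) (n : ℕ) :
    Set X :=
  ⋃ m, ⋃ (_ : n < m), qdown ε A n (m - n) (nearestPts x (A m))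

section helper
variable {X : Type*} [MetricSpace X]

lemma mem_qmap {e : ℝ} {A C : Set X} {a : X} :
    a ∈ qmap e A C ↔ ∃ c ∈ C, dist a c < e ∧ a ∈ A := by
  simp only [qmap, mem_iUnion, mem_inter_iff, mem_ball, exists_prop]

lemma qmap_subset (e : ℝ) (A C : Set X) : qmap e A C ⊆ A := by
  intro a ha; rw [mem_qmap] at ha; obtain ⟨c, _, _, h⟩ := ha; exact h

lemma qmap_mono (e : ℝ) (A : Set X) {C D : Set X} (h : C ⊆ D) : qmap e A C ⊆ qmap e A D := by
  intro a ha; rw [mem_qmap] at ha ⊢; obtain ⟨c, hc, h1, h2⟩ := ha; exact ⟨c, h hc, h1, h2⟩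

lemma qdown_mono (ε : ℕ → ℝ) (A : ℕ → Set X) (n : ℕ) :
    ∀ (k : ℕ) {C D : Set X}, C ⊆ D → qdown ε A n k C ⊆ qdown ε A n k D := by
  intro k
  induction k with
  | zero => intro C D h; exact h
  | succ k ih => intro C D h; exact ih (qmap_mono _ _ h)

lemma qdown_subset (ε : ℕ → ℝ) (A : ℕ → Set X) (n : ℕ) :
    ∀ (k : ℕ) (C : Set X), C ⊆ A (n + k) → qdown ε A n k C ⊆ A n := by
  intro k
  induction k with
  | zero => intro C h; exact h
  | succ k ih => intro C _; exact ih _ (qmap_subset _ _ _)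

lemma qdown_eq_qmap_qdown (ε : ℕ → ℝ) (A : ℕ → Set X) (n : ℕ) :
    ∀ (k : ℕ) (C : Set X),
      qdown ε A n (k + 1) C = qmap (ε n) (A n) (qdown ε A (n + 1) k C) := by
  intro k
  induction k with
  | zero => intro C; rfl
  | succ k ih =>
    intro C
    have h : n + 1 + k = n + k + 1 := by omega
    calc qdown ε A n (k + 2) C
        = qdown ε A n (k + 1) (qmap (ε (n + k + 1)) (A (n + k + 1)) C) := rfl
      _ = qmap (ε n) (A n) (qdown ε A (n + 1) k (qmap (ε (n + k + 1)) (A (n + k + 1)) C)) :=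
          ih _
      _ = qmap (ε n) (A n) (qdown ε A (n + 1) (k + 1) C) := by
          rw [show qdown ε A (n + 1) (k + 1) C
              = qdown ε A (n + 1) k (qmap (ε (n + 1 + k)) (A (n + 1 + k)) C) from rfl, h]

lemma mem_Xstar {ε : ℕ → ℝ} {A : ℕ → Set X} {x : X} {n : ℕ} {a : X} :
    a ∈ Xstar ε A x n ↔ ∃ m, n < m ∧ a ∈ qdown ε A n (m - n) (nearestPts x (A m)) := by
  simp [Xstar]

end helper

/-- The finite space `U_δ(A)`: nonempty subsets of `A` of diameter `< δ`. -/
def Ufin {X : Type*} [MetricSpace X] (δ : ℝ) (A : Set X) : Type _ :=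
  {C : Set X // C ⊆ A ∧ C.Nonempty ∧ Metric.diam C < δ}

/-- The Alexandroff topology of the reverse-inclusion order on `U_δ(A)`
(`C ≤ D` iff `D ⊆ C`): the open sets are the lower sets, i.e. the sets closed under
passing to supersets; the minimal open neighborhood of `C` is `{D : C ⊆ D}`. -/
instance UfinTop {X : Type*} [MetricSpace X] (δ : ℝ) (A : Set X) :
    TopologicalSpace (Ufin δ A) where
  IsOpen S := ∀ C ∈ S, ∀ D : Ufin δ A, C.1 ⊆ D.1 → D ∈ S
  isOpen_univ := fun _ _ D _ => Set.mem_univ D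
  isOpen_inter := fun s t hs ht C hC D hCD =>
    ⟨hs C hC.1 D hCD, ht C hC.2 D hCD⟩
  isOpen_sUnion := fun S hS C hC D hCD => by
    obtain ⟨s, hsS, hCs⟩ := hC
    exact ⟨s, hsS, hS s hsS C hCs D hCD⟩

/-- The inverse limit `𝒳` of the inverse sequence `(U_{4ε_n}(A_n), q_{n,n+1})`, as the
subspace of the product `Π n, U_{4ε_n}(A_n)` consisting of the threads. -/
def FasoLimit {X : Type*} [MetricSpace X] (ε : ℕ → ℝ) (A : ℕ → Set X) : Type _ :=
  {f : (n : ℕ) → Ufin (4 * ε n) (A n) // ∀ n, qmap (ε n) (A n) (f (n + 1)).1 = (f n).1}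

instance FasoLimitTop {X : Type*} [MetricSpace X] (ε : ℕ → ℝ) (A : ℕ → Set X) :
    TopologicalSpace (FasoLimit ε A) :=
  inferInstanceAs (TopologicalSpace
    {f : (n : ℕ) → Ufin (4 * ε n) (A n) //
      ∀ n, qmap (ε n) (A n) (f (n + 1)).1 = (f n).1})

/-- The map `φ : 𝒳 → X` sending each thread `(C_n)` to the unique point `x` with
`C_n → {x}` in the Hausdorff metric is well-defined, continuous and surjective. -/
theorem stmt_14 {X : Type*} [MetricSpace X] [CompactSpace X] [Nonempty X]
    (ε : ℕ → ℝ) (A : ℕ → Set X) (γ : ℕ → ℝ)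
    (hεpos : ∀ n, 0 < ε n)
    (hεlim : Filter.Tendsto ε Filter.atTop (nhds 0))
    (hAfin : ∀ n, (A n).Finite)
    (hApprox : ∀ n, ∀ x : X, ∃ a ∈ A n, dist x a < ε n)
    (hγ : ∀ n, IsLUB (Set.range fun x : X => Metric.infDist x (A n)) (γ n))
    (hrec : ∀ n, ε (n + 1) < (ε n - γ n) / 2)
    :
    ∃ φ : FasoLimit ε A → X,
      (∀ t : FasoLimit ε A,
        Filter.Tendsto (fun n => Metric.hausdorffDist ((t.1 n).1) {φ t})
          Filter.atTop (nhds 0)) ∧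
      Continuous φ ∧ Function.Surjective φ := by
  classical
  have hγle : ∀ n (y : X), infDist y (A n) ≤ γ n := fun n y => (hγ n).1 ⟨y, rfl⟩
  have hγ0 : ∀ n, 0 ≤ γ n :=
    fun n => le_trans infDist_nonneg (hγle n (Classical.arbitrary X))
  have hγlt : ∀ n, γ n < ε n := fun n => by
    have := hrec n; have := hεpos (n + 1); linarith
  have hhalf : ∀ n, ε (n + 1) ≤ ε n / 2 := fun n => by
    have := hrec n; have := hγ0 n; linarith
  have hAne : ∀ n, (A n).Nonempty := fun n => by
    obtain ⟨a, ha, -⟩ := hApprox n (Classical.arbitrary X); exact ⟨a, ha⟩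
  have hprop : ∀ {δ : ℝ} {B : Set X} (C : Ufin δ B),
      C.1 ⊆ B ∧ C.1.Nonempty ∧ Metric.diam C.1 < δ := fun C => C.2
  -- existence of the limit point for each thread
  have key : ∀ t : FasoLimit ε A, ∃ x : X, ∀ n, ∀ c ∈ (t.1 n).1, dist c x ≤ 10 * ε n := by
    intro t
    choose c hc using fun n => (hprop (t.1 n)).2.1
    have hstep : ∀ n, dist (c n) (c (n + 1)) ≤ 3 * ε n := by
      intro n
      have h1 : c n ∈ qmap (ε n) (A n) (t.1 (n + 1)).1 := by rw [t.2 n]; exact hc n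
      rw [mem_qmap] at h1
      obtain ⟨d, hd, hdist, -⟩ := h1
      have hdiam : dist d (c (n + 1)) ≤ Metric.diam (t.1 (n + 1)).1 :=
        dist_le_diam_of_mem isBounded_of_compactSpace hd (hc (n + 1))
      have h2 := (hprop (t.1 (n + 1))).2.2
      have h3 := hhalf n
      calc dist (c n) (c (n + 1)) ≤ dist (c n) d + dist d (c (n + 1)) := dist_triangle _ _ _
        _ ≤ ε n + 4 * ε (n + 1) := add_le_add hdist.le (hdiam.trans h2.le)
        _ ≤ 3 * ε n := by linarith
    have hmono : ∀ n k, dist (c n) (c (n + k)) ≤ 6 * ε n - 6 * ε (n + k) := by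
      intro n k
      induction k with
      | zero => simp
      | succ k ih =>
        have h1 := hstep (n + k)
        have h2 := hhalf (n + k)
        calc dist (c n) (c (n + (k + 1)))
            ≤ dist (c n) (c (n + k)) + dist (c (n + k)) (c (n + k + 1)) := dist_triangle _ _ _
          _ ≤ (6 * ε n - 6 * ε (n + k)) + 3 * ε (n + k) := add_le_add ih h1
          _ ≤ 6 * ε n - 6 * ε (n + (k + 1)) := by
              rw [show n + (k + 1) = n + k + 1 from rfl]; linarith
    have hcauchy : CauchySeq c := by
      rw [Metric.cauchySeq_iff']
      intro δ hδ
      obtain ⟨N, hN⟩ := (hεlim.eventually (gt_mem_nhds (by linarith : (0:ℝ) < δ / 6))).exists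
      refine ⟨N, fun n hn => ?_⟩
      obtain ⟨k, rfl⟩ := Nat.exists_eq_add_of_le hn
      rw [dist_comm]
      have := hmono N k
      have := hεpos (N + k)
      linarith
    obtain ⟨x, hx⟩ := cauchySeq_tendsto_of_complete hcauchy
    refine ⟨x, fun n c' hc' => ?_⟩
    have hlim : dist (c n) x ≤ 6 * ε n := by
      have htd : Tendsto (fun m => dist (c n) (c m)) atTop (nhds (dist (c n) x)) :=
        tendsto_const_nhds.dist hx
      refine le_of_tendsto htd ?_
      filter_upwards [eventually_ge_atTop n] with m hm
      obtain ⟨k, rfl⟩ := Nat.exists_eq_add_of_le hm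
      have := hmono n k
      have := hεpos (n + k)
      linarith
    have hdc : dist c' (c n) ≤ 4 * ε n :=
      (dist_le_diam_of_mem isBounded_of_compactSpace hc' (hc n)).trans (hprop (t.1 n)).2.2.le
    calc dist c' x ≤ dist c' (c n) + dist (c n) x := dist_triangle _ _ _
      _ ≤ 10 * ε n := by linarith
  choose φ hφ using key
  have h10lim : Tendsto (fun n => 10 * ε n) atTop (nhds 0) := by
    simpa using hεlim.const_mul (10 : ℝ)
  refine ⟨φ, ?_, ?_, ?_⟩
  · -- convergence in Hausdorff distance
    intro t
    apply squeeze_zero (fun n => hausdorffDist_nonneg) _ h10lim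
    intro n
    apply hausdorffDist_le_of_mem_dist (by have := hεpos n; linarith)
    · intro y hy
      exact ⟨φ t, mem_singleton _, hφ t n y hy⟩
    · intro y hy
      rw [mem_singleton_iff] at hy
      obtain ⟨c0, hc0⟩ := (hprop (t.1 n)).2.1
      exact ⟨c0, hc0, by rw [hy, dist_comm]; exact hφ t n c0 hc0⟩
  · -- continuity
    rw [continuous_iff_continuousAt]
    intro t
    rw [ContinuousAt, Metric.tendsto_nhds]
    intro δ hδ
    obtain ⟨n, hn⟩ := (hεlim.eventually (gt_mem_nhds (by linarith : (0:ℝ) < δ / 20))).exists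
    have hopen : IsOpen {D : Ufin (4 * ε n) (A n) | (t.1 n).1 ⊆ D.1} :=
      fun C hC D hCD => hC.trans hCD
    have hcont : Continuous (fun s : FasoLimit ε A => s.1 n) :=
      (continuous_apply n).comp continuous_subtype_val
    have hmem : {s : FasoLimit ε A | (t.1 n).1 ⊆ (s.1 n).1} ∈ nhds t :=
      (hopen.preimage hcont).mem_nhds (Set.mem_preimage.mpr (Set.mem_setOf.mpr subset_rfl))
    filter_upwards [hmem] with s hs
    obtain ⟨c0, hc0⟩ := (hprop (t.1 n)).2.1
    have h1 := hφ t n c0 hc0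
    have h2 := hφ s n c0 (hs hc0)
    calc dist (φ s) (φ t) ≤ dist (φ s) c0 + dist c0 (φ t) := dist_triangle _ _ _
      _ ≤ 10 * ε n + 10 * ε n := by
          rw [dist_comm (φ s) c0]; exact add_le_add h2 h1
      _ < δ := by linarith
  · -- surjectivity
    intro x
    set S : ℕ → Set X := fun m => nearestPts x (A m) with hS
    have hSsub : ∀ m, S m ⊆ A m := fun m a ha => ha.1
    have hSne : ∀ m, (S m).Nonempty := by
      intro m
      obtain ⟨a, ha, hd⟩ := (hAfin m).isCompact.exists_infDist_eq_dist (hAne m) x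
      exact ⟨a, ha, hd.symm⟩
    have hSdist : ∀ m, ∀ a ∈ S m, dist x a ≤ γ m := by
      intro m a ha
      rw [ha.2]; exact hγle m x
    -- distance bound through qdown
    have hdistq : ∀ n k (β : ℝ) (C : Set X), (∀ c ∈ C, dist x c < 2 * ε (n + k) - β) →
        ∀ a ∈ qdown ε A n k C, dist x a < 2 * ε n - β := by
      intro n k
      induction k with
      | zero => intro β C hC a ha; exact hC a ha
      | succ k ih =>
        intro β C hC a ha
        refine ih β (qmap (ε (n + k)) (A (n + k)) C) ?_ a ha
        intro c hc
        rw [mem_qmap] at hc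
        obtain ⟨d, hd, hdist, -⟩ := hc
        have h1 := hC d hd
        have h2 := hrec (n + k)
        have h3 := hγ0 (n + k)
        have h4 : dist x c ≤ dist x d + dist d c := dist_triangle _ _ _
        rw [dist_comm d c] at h4
        have h5 : n + (k + 1) = n + k + 1 := rfl
        rw [h5] at h1
        linarith
    have hXdist : ∀ n, ∀ a ∈ Xstar ε A x n, dist x a < 2 * ε n := by
      intro n a ha
      rw [mem_Xstar] at ha
      obtain ⟨m, hm, ha⟩ := ha
      have hnk : n + (m - n) = m := by omega
      have := hdistq n (m - n) (ε m) (S m) ?_ a ha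
      · have := hεpos m; linarith
      · intro c hc
        rw [hnk]
        have := hSdist m c hc
        have := hγlt m
        linarith
    have hXsub : ∀ n, Xstar ε A x n ⊆ A n := by
      intro n a ha
      rw [mem_Xstar] at ha
      obtain ⟨m, hm, ha⟩ := ha
      exact qdown_subset ε A n (m - n) (S m) (by rw [show n + (m - n) = m from by omega]; exact hSsub m) ha
    have hXne : ∀ n, (Xstar ε A x n).Nonempty := by
      intro n
      obtain ⟨c0, hc0⟩ := hSne (n + 1)
      obtain ⟨a, ha, hd⟩ := hApprox n c0
      refine ⟨a, mem_Xstar.mpr ⟨n + 1, Nat.lt_succ_self n, ?_⟩⟩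
      rw [show n + 1 - n = 1 from by omega]
      exact mem_qmap.mpr ⟨c0, hc0, by rw [dist_comm]; exact hd, ha⟩
    have hXdiam : ∀ n, Metric.diam (Xstar ε A x n) < 4 * ε n := by
      intro n
      obtain ⟨a0, ha0, hmax⟩ := Set.exists_max_image (Xstar ε A x n) (fun a => dist x a)
        ((hAfin n).subset (hXsub n)) (hXne n)
      have h0 : Metric.diam (Xstar ε A x n) ≤ 2 * dist x a0 := by
        apply diam_le_of_forall_dist_le (by have := dist_nonneg (x := x) (y := a0); linarith)
        intro a ha b hb
        calc dist a b ≤ dist a x + dist x b := dist_triangle _ _ _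
          _ ≤ 2 * dist x a0 := by
              have := hmax a ha; have := hmax b hb
              rw [dist_comm a x]
              linarith
      have := hXdist n a0 ha0
      linarith
    -- absorption
    have habsorb : ∀ k, S k ⊆ qmap (ε k) (A k) (S (k + 1)) := by
      intro k a ha
      obtain ⟨c, hcmem⟩ := hSne (k + 1)
      refine mem_qmap.mpr ⟨c, hcmem, ?_, ha.1⟩
      have h1 : dist x a ≤ γ k := hSdist k a ha
      have h2 : dist x c ≤ γ (k + 1) := hSdist (k + 1) c hcmem
      have h3 := hrec k
      have h4 := hγlt (k + 1)
      have h6 := hγlt k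
      have h5 : dist a c ≤ dist a x + dist x c := dist_triangle _ _ _
      rw [dist_comm a x] at h5
      linarith
    -- thread property
    have hthread : ∀ n, qmap (ε n) (A n) (Xstar ε A x (n + 1)) = Xstar ε A x n := by
      intro n
      apply Set.Subset.antisymm
      · intro a ha
        rw [mem_qmap] at ha
        obtain ⟨c, hc, hdist, haA⟩ := ha
        rw [mem_Xstar] at hc
        obtain ⟨m, hm, hc⟩ := hc
        refine mem_Xstar.mpr ⟨m, by omega, ?_⟩
        rw [show m - n = (m - (n + 1)) + 1 from by omega, qdown_eq_qmap_qdown]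
        exact mem_qmap.mpr ⟨c, hc, hdist, haA⟩
      · intro a ha
        rw [mem_Xstar] at ha
        obtain ⟨m, hm, ha⟩ := ha
        have key2 : ∃ m', n + 2 ≤ m' ∧ a ∈ qdown ε A n (m' - n) (S m') := by
          rcases Nat.lt_or_ge m (n + 2) with hlt | hge
          · have hm1 : m = n + 1 := by omega
            subst hm1
            rw [show n + 1 - n = 1 from by omega] at ha
            refine ⟨n + 2, le_refl _, ?_⟩
            rw [show n + 2 - n = 2 from by omega]
            have : qdown ε A n 1 (S (n + 1)) ⊆ qdown ε A n 1 (qmap (ε (n + 1)) (A (n + 1)) (S (n + 2))) :=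
              qdown_mono ε A n 1 (habsorb (n + 1))
            exact this ha
          · exact ⟨m, hge, ha⟩
        obtain ⟨m', hm', ha'⟩ := key2
        rw [show m' - n = (m' - (n + 1)) + 1 from by omega, qdown_eq_qmap_qdown] at ha'
        rw [mem_qmap] at ha' ⊢
        obtain ⟨c, hc, h1, h2⟩ := ha'
        exact ⟨c, mem_Xstar.mpr ⟨m', by omega, hc⟩, h1, h2⟩
    set t : FasoLimit ε A := ⟨fun n => ⟨Xstar ε A x n, hXsub n, hXne n, hXdiam n⟩, hthread⟩ with ht
    refine ⟨t, ?_⟩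
    have hb : ∀ n, dist (φ t) x ≤ 12 * ε n := by
      intro n
      obtain ⟨a, ha⟩ := hXne n
      have h1 : dist a (φ t) ≤ 10 * ε n := hφ t n a ha
      have h2 : dist x a < 2 * ε n := hXdist n a ha
      calc dist (φ t) x ≤ dist (φ t) a + dist a x := dist_triangle _ _ _
        _ ≤ 12 * ε n := by rw [dist_comm (φ t) a, dist_comm a x]; linarith
    have h12 : Tendsto (fun n => 12 * ε n) atTop (nhds 0) := by
      simpa using hεlim.const_mul (12 : ℝ)
    have : dist (φ t) x ≤ 0 := ge_of_tendsto' h12 hb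
    have := le_antisymm this dist_nonneg
    exact dist_eq_zero.mp this
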